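/- arXiv:2209.03590 — 11 statements merged into one kernel-verified Lean document; each statement's English description precedes it below -/
import Mathlib

section
/- For every positive integer n, the n-dimensional volume (surface area) of the unit sphere S^n in ℝ^{n+1} satisfies vol(S^n) = 2 · ∏_{j=0}^{n-1} Z(-j), where Z(s) = π · 2^s · ζ_ℤ(s/2) and ζ_ℤ(s) = Γ(1/2 - s)/(4^s √π Γ(1 - s)). -/
open Real Complex

noncomputable def zetaZ (s : ℂ) : ℂ :=
  Complex.Gamma (1/2 - s) / ((4:ℂ) ^ s * (Real.sqrt Real.pi : ℂ) * Complex.Gamma (1 - s))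

noncomputable def Zfun (s : ℂ) : ℂ := (Real.pi : ℂ) * (2:ℂ) ^ s * zetaZ (s / 2)

noncomputable def sphereVolume (n : ℕ) : ℝ :=
  2 * Real.pi ^ (((n:ℝ) + 1) / 2) / Real.Gamma (((n:ℝ) + 1) / 2)

/-!
Since `4 ^ (s / 2) = 2 ^ s`, the powers of two cancel in `Z s` and `Z (-j) = √π Γ((j+1)/2) / Γ((j+2)/2)`.
The product over `j < n` therefore telescopes to `√π ^ n Γ(1/2) / Γ((n+1)/2) = π ^ ((n+1)/2) / Γ((n+1)/2)`,
using `Γ(1/2) = √π`.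
-/

open Finset

theorem prod_range_div_succ₀ {K : Type*} [Field K] (f : ℕ → K) (hf : ∀ i, f i ≠ 0) (n : ℕ) :
    ∏ i ∈ range n, f i / f (i + 1) = f 0 / f n := by
  simpa using congrArg Units.val (prod_range_div' (fun i ↦ Units.mk0 (f i) (hf i)) n)

theorem four_cpow_div_two (s : ℂ) : (4 : ℂ) ^ (s / 2) = 2 ^ s := by
  have h := mul_cpow_ofReal_nonneg (a := 2) (b := 2) zero_le_two zero_le_two (s / 2)
  push_cast at h
  rw [show (4 : ℂ) = 2 * 2 by norm_num, h, ← cpow_add _ _ two_ne_zero, add_halves]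

theorem Zfun_eq (s : ℂ) : Zfun s = √π * Gamma (1 / 2 - s / 2) / Gamma (1 - s / 2) := by
  have h2 : (2 : ℂ) ^ s ≠ 0 := by simp
  have hπ : (π : ℂ) = √π * √π := by rw [← ofReal_mul, Real.mul_self_sqrt pi_pos.le]
  have hs : ((√π : ℝ) : ℂ) ≠ 0 := by simp [Real.sqrt_ne_zero'.mpr pi_pos]
  rw [Zfun, zetaZ, four_cpow_div_two, hπ]
  field_simp

theorem Zfun_neg_natCast (j : ℕ) :
    Zfun (-j) = ((√π * (Real.Gamma ((j + 1) / 2) / Real.Gamma (((j + 1 : ℕ) + 1) / 2)) : ℝ) : ℂ) := by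
  have hnum : 1 / 2 - -(j : ℂ) / 2 = (((j + 1) / 2 : ℝ) : ℂ) := by push_cast; ring
  have hden : 1 - -(j : ℂ) / 2 = ((((j + 1 : ℕ) + 1) / 2 : ℝ) : ℂ) := by push_cast; ring
  rw [Zfun_eq, hnum, hden, Gamma_ofReal, Gamma_ofReal]
  push_cast
  ring

theorem prod_range_sqrt_pi_mul_Gamma_div (n : ℕ) :
    ∏ j ∈ range n, √π * (Real.Gamma ((j + 1) / 2) / Real.Gamma (((j + 1 : ℕ) + 1) / 2)) =
      √π ^ (n + 1) / Real.Gamma ((n + 1) / 2) := by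
  rw [prod_mul_distrib, prod_const, card_range,
    prod_range_div_succ₀ (fun j : ℕ ↦ Real.Gamma ((j + 1) / 2))
      (fun j ↦ (Real.Gamma_pos_of_pos (by positivity)).ne'),
    Nat.cast_zero, zero_add, Real.Gamma_one_half_eq, pow_succ, mul_div_assoc]

theorem sphereVolume_eq_sqrt_pi_pow (n : ℕ) : sphereVolume n = 2 * √π ^ (n + 1) / Real.Gamma ((n + 1) / 2) := by
  rw [sphereVolume, Real.sqrt_eq_rpow, ← Real.rpow_natCast, ← Real.rpow_mul pi_pos.le]
  push_cast
  ring_nf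

theorem volume_sphere_eq_prod_Z_general (n : ℕ) :
    (sphereVolume n : ℂ) = 2 * ∏ j ∈ Finset.range n, Zfun (-(j : ℂ)) := by
  simp_rw [Zfun_neg_natCast, ← ofReal_prod, prod_range_sqrt_pi_mul_Gamma_div, sphereVolume_eq_sqrt_pi_pow]
  push_cast
  ring

theorem volume_sphere_eq_prod_Z (n : ℕ) (hn : 1 ≤ n) :
    (sphereVolume n : ℂ) = 2 * ∏ j ∈ Finset.range n, Zfun (-(j : ℂ)) :=
  volume_sphere_eq_prod_Z_general n
end

section
/- For all complex s with s not a positive integer or positive half-integer, ζ_ℤ(s) = ∏_{k=1}^{∞} (k - s)^2/(k(k - 2s)), where the infinite product converges. -/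
/-!
Put `a = 1 - s` and `j = k - 1`: the `k`-th factor is `(a + j) ^ 2 / ((1 + j) * (2a - 1 + j))`.
Since `1 + (2a - 1) = a + a`, Euler's limit `Γ(z) = lim n ^ z n! / ∏_{j ≤ n} (z + j)` turns the
partial products into a ratio of Gamma sequences in which the powers of `n` cancel, so they tend
to `Γ(1) Γ(1 - 2s) / Γ(1 - s) ^ 2`. Legendre's duplication formula at `z = 1/2 - s` identifies this
value with `ζ_ℤ(s)`.
-/

open Real Complex Filter

open Finset Topology

namespace Complex

theorem GammaSeq_mul_div_GammaSeq_mul_eq_prod {a b c d : ℂ} (habcd : a + b = c + d)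
    {n : ℕ} (hn : n ≠ 0) :
    GammaSeq a n * GammaSeq b n / (GammaSeq c n * GammaSeq d n) =
      ∏ j ∈ range (n + 1), (c + j) * (d + j) / ((a + j) * (b + j)) := by
  have hn' : (n : ℂ) ≠ 0 := Nat.cast_ne_zero.mpr hn
  have hpow : (n : ℂ) ^ a * (n : ℂ) ^ b = (n : ℂ) ^ c * (n : ℂ) ^ d := by
    rw [← cpow_add _ _ hn', ← cpow_add _ _ hn', habcd]
  have hne : (n : ℂ) ^ c * (n : ℂ) ^ d * (n.factorial : ℂ) ^ 2 ≠ 0 := by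
    rw [← cpow_add _ _ hn']
    exact mul_ne_zero (cpow_ne_zero_iff.mpr (Or.inl hn'))
      (pow_ne_zero 2 (Nat.cast_ne_zero.mpr n.factorial_ne_zero))
  simp only [GammaSeq, prod_div_distrib, prod_mul_distrib, div_mul_div_comm, div_div_div_eq]
  calc _ = (∏ j ∈ range (n + 1), (c + j)) * (∏ j ∈ range (n + 1), (d + j)) /
          ((∏ j ∈ range (n + 1), (a + j)) * (∏ j ∈ range (n + 1), (b + j))) *
        ((n : ℂ) ^ a * (n : ℂ) ^ b * (n.factorial : ℂ) ^ 2 /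
          ((n : ℂ) ^ c * (n : ℂ) ^ d * (n.factorial : ℂ) ^ 2)) := by ring
    _ = _ := by rw [hpow, div_self hne, mul_one]

theorem tendsto_prod_mul_div_mul_Gamma {a b c d : ℂ} (habcd : a + b = c + d)
    (hc : ∀ m : ℕ, c ≠ -m) (hd : ∀ m : ℕ, d ≠ -m) :
    Tendsto (fun n : ℕ ↦ ∏ j ∈ range n, (c + j) * (d + j) / ((a + j) * (b + j))) atTop
      (𝓝 (Gamma a * Gamma b / (Gamma c * Gamma d))) := by
  rw [← tendsto_add_atTop_iff_nat 1]
  refine (((GammaSeq_tendsto_Gamma a).mul (GammaSeq_tendsto_Gamma b)).div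
    ((GammaSeq_tendsto_Gamma c).mul (GammaSeq_tendsto_Gamma d))
    (mul_ne_zero (Gamma_ne_zero hc) (Gamma_ne_zero hd))).congr' ?_
  filter_upwards [eventually_ne_atTop 0] with n hn
  exact GammaSeq_mul_div_GammaSeq_mul_eq_prod habcd hn

theorem four_cpow (s : ℂ) : (4 : ℂ) ^ s = 2 ^ (2 * s) := by
  rw [cpow_ofNat_mul' (by simp [Real.pi_pos]) (by simp [Real.pi_pos.le])]
  norm_num

end Complex

theorem zetaZ_eq_Gamma_div {s : ℂ} (hs : Gamma (1 - s) ≠ 0) :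
    zetaZ s = Gamma (1 - 2 * s) / Gamma (1 - s) ^ 2 := by
  have hdup := Complex.Gamma_mul_Gamma_add_half (1 / 2 - s)
  rw [show 1 / 2 - s + 1 / 2 = 1 - s by ring, show 2 * (1 / 2 - s) = 1 - 2 * s by ring,
    show 1 - (1 - 2 * s) = 2 * s by ring] at hdup
  have hsqrt : ((√π : ℝ) : ℂ) ≠ 0 := ofReal_ne_zero.mpr (Real.sqrt_ne_zero'.mpr Real.pi_pos)
  have htwo : (2 : ℂ) ^ (2 * s) ≠ 0 := cpow_ne_zero_iff.mpr (Or.inl two_ne_zero)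
  rw [zetaZ, Complex.four_cpow, div_eq_div_iff (by positivity) (pow_ne_zero 2 hs)]
  linear_combination Gamma (1 - s) * hdup

theorem zetaZ_prod_formula (s : ℂ)
    (hs : ∀ n : ℕ, 1 ≤ n → s ≠ (n : ℂ) ∧ s ≠ (n : ℂ) - 1/2) :
    Tendsto (fun N : ℕ => ∏ k ∈ Finset.Icc 1 N,
        ((k : ℂ) - s) ^ 2 / ((k : ℂ) * ((k : ℂ) - 2 * s)))
      atTop (nhds (zetaZ s)) := by
  have h1s : ∀ m : ℕ, 1 - s ≠ -m := fun m h ↦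
    (hs (m + 1) m.succ_pos).1 (by push_cast; linear_combination -h)
  have key := Complex.tendsto_prod_mul_div_mul_Gamma (a := 1) (b := 1 - 2 * s) (by ring) h1s h1s
  rw [Complex.Gamma_one, one_mul, ← sq, ← zetaZ_eq_Gamma_div (Complex.Gamma_ne_zero h1s)] at key
  refine key.congr fun N ↦ ?_
  rw [← Finset.Ico_add_one_right_eq_Icc, prod_Ico_eq_prod_range, Nat.add_sub_cancel]
  refine prod_congr rfl fun j _ ↦ ?_
  push_cast
  ring
end

section
/- For x, y complex numbers that are not nonpositive integers with x + y not a nonpositive integer, the Beta function satisfies B(x,y) = Γ(x)Γ(y)/Γ(x+y) = ((x+y)/(xy)) · ∏_{k=1}^{∞} (1 + (x+y)/k)/((1 + x/k)(1 + y/k)). -/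
/-!
Gauss's limit `Γ(s) = lim n^s n! / (s (s+1) ⋯ (s+n))` reads `Γ(s) = lim n^s / (s ∏_{k ≤ n} (1 + s/k))`.
In the quotient `Γ(x) Γ(y) / Γ(x+y)` of these sequences the powers `n^x n^y / n^(x+y)` cancel
exactly, so the quotient of the `n`-th terms is the `n`-th partial product.
-/

open Complex Filter Finset
open scoped Nat

lemma prod_range_add_one_add_natCast (s : ℂ) (n : ℕ) :
    ∏ j ∈ range (n + 1), (s + j) = s * n ! * ∏ k ∈ Icc 1 n, (1 + s / k) := by
  induction n with
  | zero => simp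
  | succ n ih =>
    have hn : (n + 1 : ℂ) ≠ 0 := n.cast_add_one_ne_zero
    rw [prod_range_succ, ih, prod_Icc_succ_top (by omega), Nat.factorial_succ]
    push_cast
    field_simp
    ring

lemma Complex.GammaSeq_eq_cpow_div_mul_prod (s : ℂ) (n : ℕ) :
    GammaSeq s n = (n : ℂ) ^ s / (s * ∏ k ∈ Icc 1 n, (1 + s / k)) := by
  have hfac : (n ! : ℂ) ≠ 0 := Nat.cast_ne_zero.mpr n.factorial_ne_zero
  rw [GammaSeq, prod_range_add_one_add_natCast]
  field_simp

lemma Complex.GammaSeq_mul_GammaSeq_div_GammaSeq (x y : ℂ) {n : ℕ} (hn : n ≠ 0) :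
    GammaSeq x n * GammaSeq y n / GammaSeq (x + y) n =
      (x + y) / (x * y) * ∏ k ∈ Icc 1 n, (1 + (x + y) / k) / ((1 + x / k) * (1 + y / k)) := by
  have hn' : (n : ℂ) ≠ 0 := Nat.cast_ne_zero.mpr hn
  have hpow : (n : ℂ) ^ x * (n : ℂ) ^ y ≠ 0 := by simp [hn']
  simp only [GammaSeq_eq_cpow_div_mul_prod]
  rw [cpow_add _ _ hn', div_mul_div_comm, div_div_div_cancel_left' _ _ hpow, prod_div_distrib,
    prod_mul_distrib]
  ring

theorem beta_product_formula_general (x y : ℂ)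
    (hxy : ∀ n : ℕ, x + y ≠ -(n : ℂ)) :
    Tendsto (fun N : ℕ => ((x + y) / (x * y)) * ∏ k ∈ Finset.Icc 1 N,
        (1 + (x + y) / (k : ℂ)) / ((1 + x / (k : ℂ)) * (1 + y / (k : ℂ))))
      atTop (nhds (Complex.Gamma x * Complex.Gamma y / Complex.Gamma (x + y))) := by
  have hGammaSeq : Tendsto (fun n ↦ GammaSeq x n * GammaSeq y n / GammaSeq (x + y) n) atTop
      (nhds (Gamma x * Gamma y / Gamma (x + y))) :=
    ((GammaSeq_tendsto_Gamma x).mul (GammaSeq_tendsto_Gamma y)).div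
      (GammaSeq_tendsto_Gamma (x + y)) (Gamma_ne_zero hxy)
  refine hGammaSeq.congr' ?_
  filter_upwards [eventually_ne_atTop 0] with n hn
  exact GammaSeq_mul_GammaSeq_div_GammaSeq x y hn

theorem beta_product_formula (x y : ℂ)
    (hx : ∀ n : ℕ, x ≠ -(n : ℂ)) (hy : ∀ n : ℕ, y ≠ -(n : ℂ))
    (hxy : ∀ n : ℕ, x + y ≠ -(n : ℂ)) :
    Tendsto (fun N : ℕ => ((x + y) / (x * y)) * ∏ k ∈ Finset.Icc 1 N,
        (1 + (x + y) / (k : ℂ)) / ((1 + x / (k : ℂ)) * (1 + y / (k : ℂ))))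
      atTop (nhds (Complex.Gamma x * Complex.Gamma y / Complex.Gamma (x + y))) :=
  beta_product_formula_general x y hxy
end

section
/- For every natural number n ≥ 1, ζ_ℤ(-n) = 4^n π^{-1/2} Γ(1/2 + n)/Γ(1 + n) = binom(2n, n). -/
open Complex
open scoped Real Nat

lemma Complex.ofReal_sqrt_pi : ((√π : ℝ) : ℂ) = (π : ℂ) ^ (1 / 2 : ℂ) := by
  rw [Real.sqrt_eq_rpow, ofReal_cpow Real.pi_pos.le]
  norm_num

lemma Complex.Gamma_nat_add_half (n : ℕ) :
    Gamma (n + 1 / 2) = (2 * n) ! * √π / (4 ^ n * n !) := by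
  have h := Gamma_mul_Gamma_add_half (n + 1 / 2)
  rw [show 1 - 2 * ((n : ℂ) + 1 / 2) = -(2 * n : ℕ) by push_cast; ring,
    show 2 * ((n : ℂ) + 1 / 2) = (2 * n : ℕ) + 1 by push_cast; ring,
    show (n : ℂ) + 1 / 2 + 1 / 2 = n + 1 by ring, Gamma_nat_eq_factorial,
    Gamma_nat_eq_factorial, cpow_neg, cpow_natCast, pow_mul] at h
  have hfact : (n ! : ℂ) ≠ 0 := Nat.cast_ne_zero.mpr n.factorial_ne_zero
  rw [eq_div_iff (mul_ne_zero (pow_ne_zero _ (by norm_num)) hfact), mul_left_comm, mul_comm, h]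
  norm_num
  field_simp

lemma zetaZ_neg_natCast (n : ℕ) :
    zetaZ (-n) = 4 ^ n * Gamma (n + 1 / 2) / (√π * n !) := by
  rw [zetaZ, cpow_neg, cpow_natCast, show (1 : ℂ) - -n = n + 1 by ring, Gamma_nat_eq_factorial,
    sub_neg_eq_add, add_comm (1 / 2 : ℂ)]
  field_simp

theorem zetaZ_neg_nat_general (n : ℕ) :
    zetaZ (-(n : ℂ))
      = (4:ℂ) ^ (n : ℕ) * ((Real.pi : ℂ)) ^ (-(1/2) : ℂ)
          * Complex.Gamma (1/2 + n) / Complex.Gamma (1 + n) ∧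
    zetaZ (-(n : ℂ)) = (Nat.choose (2 * n) n : ℂ) := by
  have hsqrt : (√π : ℂ) ≠ 0 := ofReal_ne_zero.mpr (Real.sqrt_pos.mpr Real.pi_pos).ne'
  refine ⟨?_, ?_⟩
  · rw [zetaZ_neg_natCast, cpow_neg, ← ofReal_sqrt_pi, add_comm (1 : ℂ), Gamma_nat_eq_factorial,
      add_comm (1 / 2 : ℂ)]
    field_simp
  · have hfact : (n ! : ℂ) ≠ 0 := Nat.cast_ne_zero.mpr n.factorial_ne_zero
    rw [zetaZ_neg_natCast, Gamma_nat_add_half, two_mul,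
      ← Nat.add_choose_mul_factorial_mul_factorial]
    push_cast
    field_simp

theorem zetaZ_neg_nat (n : ℕ) (hn : 1 ≤ n) :
    zetaZ (-(n : ℂ))
      = (4:ℂ) ^ (n : ℕ) * ((Real.pi : ℂ)) ^ (-(1/2) : ℂ)
          * Complex.Gamma (1/2 + n) / Complex.Gamma (1 + n) ∧
    zetaZ (-(n : ℂ)) = (Nat.choose (2 * n) n : ℂ) :=
  zetaZ_neg_nat_general n
end

section
/- ζ_ℤ'(0) = 0 and ζ_ℤ'(−1/2) = (8/π)(1 − 2 log 2), where ζ_ℤ(s) = Γ(1/2 − s)/(4^s √π Γ(1 − s)). -/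
/-!
The logarithmic derivative of `ζ_ℤ` is `ψ(1 - s) - ψ(1/2 - s) - log 4`, with `ψ = Γ'/Γ` the
digamma function. Since `ψ(1) = -γ`, `ψ(1/2) = -γ - 2 log 2` (Legendre duplication) and
`ψ(3/2) = ψ(1/2) + 2`, this vanishes at `s = 0` and equals `2 - 4 log 2` at `s = -1/2`, where
`ζ_ℤ(0) = 1` and `ζ_ℤ(-1/2) = 4/π`.
-/

open Complex
open scoped Real

lemma Complex.ne_neg_natCast_of_re_pos {s : ℂ} (hs : 0 < s.re) (m : ℕ) : s ≠ -m := by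
  rintro rfl
  simp only [neg_re, natCast_re, Left.neg_pos_iff] at hs
  exact hs.not_ge m.cast_nonneg

lemma Complex.hasDerivAt_Gamma_digamma {s : ℂ} (hs : ∀ m : ℕ, s ≠ -m) :
    HasDerivAt Gamma (digamma s * Gamma s) s := by
  rw [digamma_def, logDeriv_apply, div_mul_cancel₀ _ (Gamma_ne_zero hs)]
  exact (differentiableAt_Gamma s hs).hasDerivAt

lemma hasDerivAt_zetaZ {s : ℂ} (h₁ : ∀ m : ℕ, 1/2 - s ≠ -m) (h₂ : ∀ m : ℕ, 1 - s ≠ -m) :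
    HasDerivAt zetaZ (zetaZ s * (digamma (1 - s) - digamma (1/2 - s) - log 4)) s := by
  have h4₀ : (4:ℂ) ≠ 0 := by norm_num
  have h4 : (4:ℂ) ^ s ≠ 0 := cpow_ne_zero_iff.2 (Or.inl h4₀)
  have hπ : ((√π : ℝ) : ℂ) ≠ 0 := ofReal_ne_zero.2 (Real.sqrt_pos.2 Real.pi_pos).ne'
  have hΓ := Gamma_ne_zero h₂
  have hN := (hasDerivAt_Gamma_digamma h₁).comp_const_sub (1/2) s
  have hD := (((hasDerivAt_id s).const_cpow (Or.inl h4₀)).mul_const ((√π : ℝ) : ℂ)).mul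
    ((hasDerivAt_Gamma_digamma h₂).comp_const_sub 1 s)
  refine (hN.div hD (by simp [h4, hπ, hΓ])).congr_deriv ?_
  simp only [zetaZ, id, Pi.mul_apply]
  field_simp
  ring

lemma sqrt_pi_eq_Gamma_one_half : ((√π : ℝ) : ℂ) = Gamma (1/2) := by
  rw [Gamma_one_half_eq, Real.sqrt_eq_rpow, ofReal_cpow Real.pi_nonneg]
  simp

lemma four_cpow_neg_one_half : (4:ℂ) ^ (-(1/2) : ℂ) = 1/2 := by
  rw [show (4:ℂ) = ((2 ^ 2 : ℝ) : ℂ) by norm_num, show (-(1/2) : ℂ) = ((-(1/2) : ℝ) : ℂ) by norm_num,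
    ← ofReal_cpow (by positivity), Real.rpow_neg (by positivity), ← Real.sqrt_eq_rpow,
    Real.sqrt_sq zero_le_two]
  norm_num

lemma Complex.log_four : log 4 = 2 * log 2 := by
  rw [← ofNat_log, ← ofNat_log, show (4:ℝ) = 2 ^ 2 by norm_num, Real.log_pow]
  push_cast
  ring

lemma Complex.digamma_three_halves : digamma (3/2) = digamma (1/2) + 2 := by
  rw [show (3/2 : ℂ) = 1/2 + 1 by norm_num,
    digamma_apply_add_one _ (ne_neg_natCast_of_re_pos (by norm_num))]
  norm_num

lemma zetaZ_zero : zetaZ 0 = 1 := by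
  simp [zetaZ, sqrt_pi_eq_Gamma_one_half, Gamma_ne_zero_of_re_pos]

lemma zetaZ_neg_one_half : zetaZ (-(1/2)) = 4 / π := by
  have hπ : ((√π : ℝ) : ℂ) ^ 2 = π := by norm_cast; exact Real.sq_sqrt Real.pi_nonneg
  rw [zetaZ, show (1/2 - -(1/2) : ℂ) = 1 by norm_num, show (1 - -(1/2) : ℂ) = 1/2 + 1 by norm_num,
    Gamma_add_one _ (by norm_num), ← sqrt_pi_eq_Gamma_one_half, four_cpow_neg_one_half, Gamma_one,
    ← hπ]
  have : ((√π : ℝ) : ℂ) ≠ 0 := ofReal_ne_zero.2 (Real.sqrt_pos.2 Real.pi_pos).ne'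
  field_simp
  norm_num

theorem deriv_zetaZ_special :
    deriv zetaZ 0 = 0 ∧
    deriv zetaZ (-(1/2)) = (8 / (Real.pi : ℂ)) * (1 - 2 * (Real.log 2 : ℂ)) := by
  have hderiv (s : ℂ) (hs : s.re < 1/2) := hasDerivAt_zetaZ (s := s)
    (ne_neg_natCast_of_re_pos (by simpa using hs))
    (ne_neg_natCast_of_re_pos (by simp only [sub_re, one_re, sub_pos]; linarith))
  constructor
  · rw [(hderiv 0 (by norm_num)).deriv, zetaZ_zero, sub_zero, sub_zero, digamma_one, digamma_one_half,
      log_four]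
    ring
  · rw [(hderiv _ (by norm_num)).deriv, zetaZ_neg_one_half, show (1 - -(1/2) : ℂ) = 3/2 by norm_num,
      show (1/2 - -(1/2) : ℂ) = 1 by norm_num, digamma_three_halves, digamma_one, digamma_one_half,
      log_four, ofNat_log]
    ring
end

section
/- For every integer n ≥ 1, ζ_ℤ'(−n) = binom(2n,n) · ∑_{k=1}^{n} (1/k − 2/(2k−1)). -/
open Complex Nat Real

local notation "γ" => Real.eulerMascheroniConstant

lemma four_cpow_eq_two_cpow_sq (s : ℂ) : (4 : ℂ) ^ s = ((2 : ℂ) ^ s) ^ 2 := by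
  have h := natCast_mul_natCast_cpow 2 2 s
  norm_num at h
  rw [sq, h]

lemma zetaZ_eq_Gamma_div_sq (s : ℂ) : zetaZ s = Gamma (1 - 2 * s) / Gamma (1 - s) ^ 2 := by
  -- at the poles of `Γ (1 - s)` Mathlib sets `Γ (1 - s) = 0`, and both sides are `0`
  rcases eq_or_ne (Gamma (1 - s)) 0 with h | h
  · simp [zetaZ, h]
  have hdup := Gamma_mul_Gamma_add_half (1 / 2 - s)
  rw [show 1 / 2 - s + 1 / 2 = 1 - s by ring, show 2 * (1 / 2 - s) = 1 - 2 * s by ring,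
    show 1 - (1 - 2 * s) = 2 * s by ring, cpow_ofNat_mul] at hdup
  have hpi : ((√π : ℝ) : ℂ) ≠ 0 := ofReal_ne_zero.mpr (by positivity)
  have h2 : (2 : ℂ) ^ s ≠ 0 := cpow_ne_zero_iff.mpr (Or.inl two_ne_zero)
  rw [zetaZ, four_cpow_eq_two_cpow_sq, div_eq_div_iff (by positivity) (pow_ne_zero 2 h)]
  linear_combination Gamma (1 - s) * hdup

lemma hasDerivAt_Gamma_one_sub_mul {m : ℕ} {c x : ℂ} (hx : 1 - c * x = m + 1) :
    HasDerivAt (fun s ↦ Gamma (1 - c * s)) (-c * (m ! * (-γ + harmonic m))) x := by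
  have hGamma := Complex.hasDerivAt_Gamma_nat m
  rw [← hx] at hGamma
  exact (hGamma.comp x (((hasDerivAt_id x).const_mul c).const_sub 1)).congr_deriv (by ring)

lemma sum_inv_sub_two_div_eq {K : Type*} [Field K] [CharZero K] (n : ℕ) :
    ∑ k ∈ Finset.Icc 1 n, (1 / (k : K) - 2 / (2 * k - 1))
      = 2 * ((harmonic n : K) - harmonic (2 * n)) := by
  induction n with
  | zero => simp
  | succ n ih =>
    rw [Finset.sum_Icc_succ_top (by omega), ih, show 2 * (n + 1) = 2 * n + 1 + 1 by ring,
      harmonic_succ, harmonic_succ, harmonic_succ]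
    push_cast
    rw [show 2 * ((n : K) + 1) - 1 = 2 * n + 1 by ring,
      show 2 * (n : K) + 1 + 1 = 2 * (n + 1) by ring]
    field_simp
    ring

theorem deriv_zetaZ_neg_nat_general (n : ℕ) :
    deriv zetaZ (-(n : ℂ))
      = (Nat.choose (2 * n) n : ℂ)
          * ∑ k ∈ Finset.Icc 1 n, (1 / (k : ℂ) - 2 / (2 * (k : ℂ) - 1)) := by
  have hnum := hasDerivAt_Gamma_one_sub_mul (m := 2 * n) (c := 2) (x := -n) (by push_cast; ring)
  have hden := hasDerivAt_Gamma_one_sub_mul (m := n) (c := 1) (x := -n) (by ring)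
  simp only [one_mul] at hden
  have hGnum : Gamma (1 - 2 * -(n : ℂ)) = (2 * n)! := by
    rw [← Complex.Gamma_nat_eq_factorial]; push_cast; ring_nf
  have hGden : Gamma (1 - -(n : ℂ)) = n ! := by
    rw [← Complex.Gamma_nat_eq_factorial]; ring_nf
  have hfac : (n ! : ℂ) ≠ 0 := mod_cast n.factorial_ne_zero
  rw [funext zetaZ_eq_Gamma_div_sq]
  refine (hnum.div (hden.fun_pow 2) (by rw [hGden]; exact pow_ne_zero 2 hfac)).deriv.trans ?_
  rw [hGnum, hGden, sum_inv_sub_two_div_eq, two_mul n, Nat.cast_add_choose]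
  field_simp
  ring

theorem deriv_zetaZ_neg_nat (n : ℕ) (hn : 1 ≤ n) :
    deriv zetaZ (-(n : ℂ))
      = (Nat.choose (2 * n) n : ℂ)
          * ∑ k ∈ Finset.Icc 1 n, (1 / (k : ℂ) - 2 / (2 * (k : ℂ) - 1)) :=
  deriv_zetaZ_neg_nat_general n
end

section
/- For every positive integer n, the meromorphically continued function ζ_ℤ(s) = Γ(1/2 − s)/(4^s √π Γ(1 − s)) vanishes at s = n and its derivative there equals ζ_ℤ'(n) = (1/n) · binom(2n, n)^{-1}. -/
open Complex
open scoped Nat Real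

namespace Complex

theorem inv_Gamma_mul_inv_Gamma_one_sub (s : ℂ) :
    (Gamma s)⁻¹ * (Gamma (1 - s))⁻¹ = sin (π * s) / π := by
  rw [← mul_inv, Gamma_mul_Gamma_one_sub, inv_div]

theorem cos_pi_mul_neg_natCast (m : ℕ) : cos (π * -m) = (-1) ^ m := by
  rw [mul_neg, cos_neg, mul_comm, ← ofReal_natCast, ← ofReal_mul, ← ofReal_cos,
    Real.cos_nat_mul_pi]
  push_cast; rfl

theorem hasDerivAt_inv_Gamma_neg_nat (m : ℕ) :
    HasDerivAt (fun s => (Gamma s)⁻¹) ((-1) ^ m * m !) (-m) := by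
  have hpi : (π : ℂ) ≠ 0 := ofReal_ne_zero.mpr Real.pi_ne_zero
  have hreflect : HasDerivAt (fun s => sin (π * s) / π) (cos (π * -m)) (-m) := by
    simpa [hpi] using ((hasDerivAt_id (-m : ℂ)).const_mul (π : ℂ)).csin.div_const (π : ℂ)
  have hinv : HasDerivAt (fun s => (Gamma s)⁻¹) (deriv (fun s => (Gamma s)⁻¹) (-m)) (-m) :=
    (differentiable_one_div_Gamma _).hasDerivAt
  have hinv_one_sub : HasDerivAt (fun s => (Gamma (1 - s))⁻¹)
      (deriv (fun s => (Gamma (1 - s))⁻¹) (-m)) (-m) :=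
    ((differentiable_one_div_Gamma.comp (differentiable_id.const_sub 1)) _).hasDerivAt
  have hprod := (hinv.mul hinv_one_sub).unique
    (hreflect.congr_of_eventuallyEq (.of_forall inv_Gamma_mul_inv_Gamma_one_sub))
  rw [Gamma_neg_nat_eq_zero, inv_zero, zero_mul, add_zero, cos_pi_mul_neg_natCast,
    sub_neg_eq_add, add_comm, Gamma_nat_eq_factorial,
    mul_inv_eq_iff_eq_mul₀ (Nat.cast_ne_zero.mpr m.factorial_ne_zero)] at hprod
  rwa [← hprod]

theorem one_half_sub_natCast_ne_neg_natCast (n k : ℕ) : (1 / 2 : ℂ) - n ≠ -k := by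
  intro h
  have : ((1 : ℤ) : ℂ) = ((2 * n - 2 * k : ℤ) : ℂ) := by push_cast; linear_combination 2 * h
  have := Int.cast_injective this
  omega

theorem Gamma_one_half : Gamma (1 / 2) = √π := by
  simpa using (Gamma_ofReal (1 / 2)).trans (congrArg ofReal Real.Gamma_one_half_eq)

theorem Gamma_one_half_sub_natCast_mul_factorial (n : ℕ) :
    Gamma (1 / 2 - n) * (2 * n) ! = (-4) ^ n * n ! * √π := by
  induction n with
  | zero => simpa using Gamma_one_half
  | succ n ih =>
    have hrec := Gamma_add_one (1 / 2 - (n + 1 : ℕ))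
      (by simpa using one_half_sub_natCast_ne_neg_natCast (n + 1) 0)
    rw [show (1 / 2 : ℂ) - (n + 1 : ℕ) + 1 = 1 / 2 - n by push_cast; ring] at hrec
    rw [_root_.mul_add_one, Nat.factorial_succ, Nat.factorial_succ, Nat.factorial_succ]
    push_cast at hrec ⊢
    linear_combination (-4 * (n + 1 : ℂ)) * ih + (4 * (n + 1) * ((2 * n) ! : ℂ)) * hrec

end Complex

theorem zetaZ_eq_mul_inv_Gamma_one_sub (s : ℂ) :
    zetaZ s = Gamma (1 / 2 - s) / (4 ^ s * √π) * (Gamma (1 - s))⁻¹ := by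
  rw [zetaZ, div_mul_eq_div_div, div_eq_mul_inv]

theorem differentiableAt_Gamma_one_half_sub_div (n : ℕ) :
    DifferentiableAt ℂ (fun s => Gamma (1 / 2 - s) / (4 ^ s * √π)) n := by
  refine ((differentiableAt_Gamma _ (one_half_sub_natCast_ne_neg_natCast n)).comp _
    ((differentiableAt_const _).sub differentiableAt_id)).div
    ((differentiableAt_id.const_cpow (.inl (by norm_num))).mul_const _) ?_
  simp [Real.sqrt_ne_zero'.mpr Real.pi_pos]

theorem Gamma_one_half_sub_natCast_div (n : ℕ) :
    Gamma (1 / 2 - n) / (4 ^ (n : ℂ) * √π) = (-1) ^ n / ((2 * n).choose n * n !) := by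
  have hfac : (n ! : ℂ) ≠ 0 := Nat.cast_ne_zero.mpr n.factorial_ne_zero
  have hchoose : ((2 * n).choose n * n ! * n ! : ℂ) = (2 * n) ! := by
    have := Nat.choose_mul_factorial_mul_factorial (by omega : n ≤ 2 * n)
    rw [show 2 * n - n = n by omega] at this
    exact_mod_cast this
  rw [cpow_natCast, div_eq_div_iff (by simp [Real.sqrt_ne_zero'.mpr Real.pi_pos])
    (by simp [hfac, (Nat.choose_pos (by omega : n ≤ 2 * n)).ne'])]
  refine mul_right_cancel₀ hfac ?_
  linear_combination Gamma (1 / 2 - n) * hchoose + Gamma_one_half_sub_natCast_mul_factorial n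
    + (n ! * √π : ℂ) * neg_pow (4 : ℂ) n

theorem zetaZ_pos_int (n : ℕ) (hn : 1 ≤ n) :
    zetaZ (n : ℂ) = 0 ∧
    deriv zetaZ (n : ℂ) = (1 / (n : ℂ)) * (Nat.choose (2 * n) n : ℂ)⁻¹ := by
  obtain ⟨m, rfl⟩ := Nat.exists_eq_add_of_le' hn
  have hpoint : (1 : ℂ) - (m + 1 : ℕ) = -m := by push_cast; ring
  have hpole : (Gamma (1 - (m + 1 : ℕ)))⁻¹ = 0 := by
    rw [hpoint, Gamma_neg_nat_eq_zero, inv_zero]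
  have hinv : HasDerivAt (fun s => (Gamma (1 - s))⁻¹) (-((-1) ^ m * m !)) (m + 1 : ℕ) :=
    HasDerivAt.comp_const_sub 1 ((m + 1 : ℕ) : ℂ) <| by
      rw [hpoint]; exact hasDerivAt_inv_Gamma_neg_nat m
  refine ⟨by rw [zetaZ_eq_mul_inv_Gamma_one_sub, hpole, mul_zero], ?_⟩
  have hzeta := ((differentiableAt_Gamma_one_half_sub_div _).hasDerivAt.mul hinv)
    |>.congr_of_eventuallyEq (.of_forall zetaZ_eq_mul_inv_Gamma_one_sub)
  rw [hzeta.deriv, hpole, mul_zero, zero_add, Gamma_one_half_sub_natCast_div]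
  have hsq : ((-1 : ℂ) ^ m) ^ 2 = 1 := by rw [← pow_mul, mul_comm, pow_mul, neg_one_sq, one_pow]
  have hfac : (m ! : ℂ) ≠ 0 := Nat.cast_ne_zero.mpr m.factorial_ne_zero
  have hchoose : ((2 * (m + 1)).choose (m + 1) : ℂ) ≠ 0 :=
    Nat.cast_ne_zero.mpr (Nat.choose_pos (by omega)).ne'
  push_cast [Nat.factorial_succ]
  field_simp
  linear_combination hsq
end

section
/- For positive integers n and m, 2^{2m} ∑_{k=1}^{n−1} sin^{2m}(πk/n) = n · ∑_{k=−⌊m/n⌋}^{⌊m/n⌋} (−1)^{kn} binom(2m, m + kn). -/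
/-!
With `w = exp (2ix)` one has `4 sin² x = 2 - w - w⁻¹ = -w⁻¹ (w - 1)²`, so `(2 sin x)^(2m)` is a
Laurent polynomial `∑ⱼ (-1)^(j-m) C(2m, j) w^(j-m)`. Taking `x = πk/n`, `w` runs over the powers
of a primitive `n`-th root of unity `ζ`, and summing over `k < n` kills every term except those with
`n ∣ j - m`, each of which contributes `n`. Writing `j = m + tn` gives the right-hand side; the
term `k = 0` of the left-hand side vanishes since `m ≥ 1`.
-/

open Finset Complex

theorem IsPrimitiveRoot.sum_zpow_pow {K : Type*} [Field K] {ζ : K} {n : ℕ}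
    (hζ : IsPrimitiveRoot ζ n) (t : ℤ) :
    ∑ k ∈ range n, (ζ ^ t) ^ k = if (n : ℤ) ∣ t then (n : K) else 0 := by
  split_ifs with hdvd
  · simp [(hζ.zpow_eq_one_iff_dvd t).mpr hdvd]
  · have hne : ζ ^ t ≠ 1 := mt (hζ.zpow_eq_one_iff_dvd t).mp hdvd
    have hpow : (ζ ^ t) ^ n = 1 := by
      rw [← zpow_natCast, ← zpow_mul, mul_comm, zpow_mul, zpow_natCast, hζ.pow_eq_one, one_zpow]
    rw [geom_sum_eq hne, hpow, sub_self, zero_div]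

theorem two_sub_sub_inv_pow {K : Type*} [Field K] {z : K} (hz : z ≠ 0) (m : ℕ) :
    (2 - z - z⁻¹) ^ m
      = ∑ j ∈ range (2 * m + 1), (-1) ^ ((j : ℤ) - m) * (2 * m).choose j * z ^ ((j : ℤ) - m) := by
  have hsq : 2 - z - z⁻¹ = -z⁻¹ * (z - 1) ^ 2 := by field_simp; ring
  rw [hsq, mul_pow, ← pow_mul, sub_pow, mul_sum]
  refine sum_congr rfl fun j _ => ?_
  have hsign : ((-1 : K) ^ m)⁻¹ = (-1) ^ m := by rw [← inv_pow, inv_neg, inv_one]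
  rw [zpow_sub₀ hz, zpow_sub₀ (neg_ne_zero.mpr one_ne_zero), div_eq_mul_inv, div_eq_mul_inv]
  simp only [zpow_natCast, neg_pow z⁻¹, inv_pow, hsign, pow_add, pow_mul, neg_one_sq, one_pow]
  ring

theorem sum_range_filter_dvd_sub_eq_sum_Icc {M : Type*} [AddCommMonoid M] {n : ℕ} (hn : 0 < n)
    (m : ℕ) (f : ℤ → M) :
    ∑ j ∈ range (2 * m + 1) with (n : ℤ) ∣ (j : ℕ) - m, f j
      = ∑ t ∈ Icc (-((m / n : ℕ) : ℤ)) ((m / n : ℕ) : ℤ), f (m + t * n) := by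
  have hn' : (0 : ℤ) < n := by exact_mod_cast hn
  have hIcc : ∀ t : ℤ,
      t ∈ Icc (-((m / n : ℕ) : ℤ)) ((m / n : ℕ) : ℤ) ↔ -(m : ℤ) ≤ t * n ∧ t * n ≤ m := by
    intro t
    rw [mem_Icc, Int.natCast_div, neg_le, Int.le_ediv_iff_mul_le hn', Int.le_ediv_iff_mul_le hn',
      neg_mul, neg_le]
  refine sum_nbij' (fun j => ((j : ℤ) - m) / n) (fun t => (m + t * n).toNat) ?_ ?_ ?_ ?_ ?_
  · intro j hj
    simp only [mem_filter, mem_range] at hj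
    rw [hIcc, Int.ediv_mul_cancel hj.2]
    omega
  · intro t ht
    rw [hIcc] at ht
    simp only [mem_filter, mem_range]
    refine ⟨?_, ⟨t, ?_⟩⟩
    · omega
    · rw [mul_comm (n : ℤ) t]; omega
  · intro j hj
    simp only [mem_filter] at hj
    rw [Int.ediv_mul_cancel hj.2]
    omega
  · intro t ht
    rw [hIcc] at ht
    rw [Int.toNat_of_nonneg (by omega), add_sub_cancel_left, Int.mul_ediv_cancel _ hn'.ne']
  · intro j hj
    simp only [mem_filter] at hj
    rw [Int.ediv_mul_cancel hj.2, add_sub_cancel]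

theorem IsPrimitiveRoot.sum_two_sub_sub_inv_pow {K : Type*} [Field K] {ζ : K} {n : ℕ}
    (hζ : IsPrimitiveRoot ζ n) (hn : 0 < n) (m : ℕ) :
    ∑ k ∈ range n, (2 - ζ ^ k - (ζ ^ k)⁻¹) ^ m
      = n * ∑ t ∈ Icc (-((m / n : ℕ) : ℤ)) ((m / n : ℕ) : ℤ),
          (-1 : K) ^ (t * n) * ((2 * m).choose (m + t * n).toNat : K) := by
  have hζ0 : ζ ≠ 0 := hζ.ne_zero hn.ne'
  calc ∑ k ∈ range n, (2 - ζ ^ k - (ζ ^ k)⁻¹) ^ m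
      = ∑ j ∈ range (2 * m + 1), (-1) ^ ((j : ℤ) - m) * (2 * m).choose j
          * ∑ k ∈ range n, (ζ ^ ((j : ℤ) - m)) ^ k := by
        simp_rw [two_sub_sub_inv_pow (pow_ne_zero _ hζ0), mul_sum]
        rw [sum_comm]
        refine sum_congr rfl fun j _ => sum_congr rfl fun k _ => ?_
        rw [← zpow_natCast ζ k, ← zpow_mul, ← zpow_natCast (ζ ^ _) k, ← zpow_mul,
          mul_comm (k : ℤ), mul_comm]
    _ = n * ∑ j ∈ range (2 * m + 1) with (n : ℤ) ∣ (j : ℕ) - m,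
          (-1) ^ ((j : ℤ) - m) * ((2 * m).choose (j : ℤ).toNat : K) := by
        simp_rw [hζ.sum_zpow_pow, mul_ite, mul_zero, sum_ite, sum_const_zero, add_zero, mul_sum,
          Int.toNat_natCast]
        exact sum_congr rfl fun j _ => mul_comm _ _
    _ = _ := by
        simp only [sum_range_filter_dvd_sub_eq_sum_Icc hn m
          fun j : ℤ => (-1 : K) ^ (j - m) * ((2 * m).choose j.toNat : K), add_sub_cancel_left]

theorem Complex.four_mul_sin_sq (x : ℂ) :
    4 * sin x ^ 2 = 2 - exp (2 * x * I) - (exp (2 * x * I))⁻¹ := by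
  rw [sin, neg_mul, exp_neg, show 2 * x * I = x * I + x * I by ring, exp_add]
  field_simp
  ring_nf
  rw [I_sq]
  ring

theorem sin_even_power_sum (n m : ℕ) (hn : 1 ≤ n) (hm : 1 ≤ m) :
    (2:ℝ) ^ (2 * m) * ∑ k ∈ Finset.Icc 1 (n - 1), Real.sin (Real.pi * k / n) ^ (2 * m)
      = n * ∑ k ∈ Finset.Icc (-((m / n : ℕ) : ℤ)) ((m / n : ℕ) : ℤ),
          (-1 : ℝ) ^ (k * n) * (Nat.choose (2 * m) ((m : ℤ) + k * n).toNat : ℝ) := by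
  have hrange : ∑ k ∈ Icc 1 (n - 1), Real.sin (Real.pi * k / n) ^ (2 * m)
      = ∑ k ∈ range n, Real.sin (Real.pi * k / n) ^ (2 * m) := by
    refine sum_subset (fun k hk => by simp only [mem_Icc, mem_range] at hk ⊢; omega) fun k hk hk' => ?_
    obtain rfl : k = 0 := by simp only [mem_Icc, mem_range] at hk hk'; omega
    simp [show 2 * m ≠ 0 by omega]
  have hζ := Complex.isPrimitiveRoot_exp n (by omega)
  have hterm : ∀ k : ℕ, (2 : ℂ) ^ (2 * m) * sin (Real.pi * k / n) ^ (2 * m)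
      = (2 - exp (2 * Real.pi * I / n) ^ k - (exp (2 * Real.pi * I / n) ^ k)⁻¹) ^ m := by
    intro k
    rw [pow_mul, pow_mul, ← mul_pow, ← exp_nat_mul, show (2 : ℂ) ^ 2 = 4 by norm_num,
      four_mul_sin_sq, show 2 * (Real.pi * k / n) * I = k * (2 * Real.pi * I / n) by ring]
  apply Complex.ofReal_injective
  push_cast [hrange, mul_sum, hterm, hζ.sum_two_sub_sub_inv_pow (by omega)]
  rfl
end

section
/- For positive integers n and m with m < n, 2^{2m} ∑_{k=1}^{n−1} sin^{2m}(πk/n) = n · binom(2m, m). -/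
/-!
Put `ζ = exp (2πi/n)` and `e_k = exp (πik/n)`, so that `e_k² = ζ^k` and
`2 sin (πk/n) = -i (e_k - e_k⁻¹)`. The binomial theorem gives
`(2 sin (πk/n))^(2m) = (-1)^m ∑_j (-1)^j C(2m, j) (ζ^(j-m))^k`, and summing over `k < n` kills
every term with `n ∤ j - m`. Since `|j - m| ≤ m < n`, only `j = m` survives, contributing
`n C(2m, m)`. The term `k = 0` vanishes because `m ≥ 1`.
-/

open Finset
open scoped Real

lemma IsPrimitiveRoot.geom_sum_zpow_eq_zero {K : Type*} [Field K] {ζ : K} {n : ℕ}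
    (hζ : IsPrimitiveRoot ζ n) {a : ℤ} (ha : ¬ (n : ℤ) ∣ a) :
    ∑ k ∈ range n, (ζ ^ a) ^ k = 0 := by
  have hne : ζ ^ a ≠ 1 := fun h => ha ((hζ.zpow_eq_one_iff_dvd a).mp h)
  rw [geom_sum_eq hne, ← zpow_natCast, ← zpow_mul, mul_comm, zpow_mul, zpow_natCast,
    hζ.pow_eq_one, one_zpow, sub_self, zero_div]

lemma sub_inv_pow_two_mul {K : Type*} [Field K] {e : K} (he : e ≠ 0) (m : ℕ) :
    (e - e⁻¹) ^ (2 * m) =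
      ∑ j ∈ range (2 * m + 1), (-1) ^ j * ((2 * m).choose j : K) * (e ^ 2) ^ ((j : ℤ) - m) := by
  rw [sub_eq_add_neg, add_pow]
  refine sum_congr rfl fun j hj => ?_
  obtain ⟨i, hi⟩ := Nat.exists_eq_add_of_le (Nat.lt_succ_iff.mp (mem_range.mp hj))
  have hsign : (-1 : K) ^ i = (-1) ^ j := by
    rw [neg_one_pow_eq_pow_mod_two, neg_one_pow_eq_pow_mod_two (n := j),
      show i % 2 = j % 2 by omega]
  rw [hi, Nat.add_sub_cancel_left, ← zpow_natCast e 2, ← zpow_mul,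
    show ((2 : ℕ) : ℤ) * (j - m) = j - i by omega, zpow_sub₀ he, zpow_natCast, zpow_natCast,
    neg_pow, inv_pow, hsign]
  ring

theorem IsPrimitiveRoot.sum_sub_inv_pow_two_mul {K : Type*} [Field K] {ζ : K} {n m : ℕ}
    (hζ : IsPrimitiveRoot ζ n) (hmn : m < n) {e : ℕ → K} (he : ∀ k, e k ^ 2 = ζ ^ k) :
    ∑ k ∈ range n, (e k - (e k)⁻¹) ^ (2 * m) = (-1) ^ m * (2 * m).choose m * n := by
  have he0 (k : ℕ) : e k ≠ 0 := fun h =>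
    pow_ne_zero k (hζ.ne_zero (by omega)) (by rw [← he k, h, zero_pow two_ne_zero])
  calc ∑ k ∈ range n, (e k - (e k)⁻¹) ^ (2 * m)
      = ∑ k ∈ range n, ∑ j ∈ range (2 * m + 1),
          (-1) ^ j * ((2 * m).choose j : K) * (ζ ^ ((j : ℤ) - m)) ^ k := by
        refine sum_congr rfl fun k _ => ?_
        simp_rw [sub_inv_pow_two_mul (he0 k), he, ← zpow_natCast, ← zpow_mul, mul_comm]
    _ = ∑ j ∈ range (2 * m + 1),
          (-1) ^ j * ((2 * m).choose j : K) * ∑ k ∈ range n, (ζ ^ ((j : ℤ) - m)) ^ k := by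
        rw [sum_comm]
        simp_rw [mul_sum]
    _ = (-1) ^ m * (2 * m).choose m * n := by
        refine (sum_eq_single m (fun j hj hjm => ?_) (fun h => ?_)).trans (by simp)
        · have hj := mem_range.mp hj
          rw [hζ.geom_sum_zpow_eq_zero fun hdvd => hjm ?_, mul_zero]
          have := Int.eq_zero_of_abs_lt_dvd hdvd (by rw [abs_lt]; omega)
          omega
        · exact absurd (mem_range.mpr (by omega)) h

lemma Complex.two_mul_sin_pow_two_mul (θ : ℂ) (m : ℕ) :
    (2 * sin θ) ^ (2 * m) = (-1) ^ m * (exp (θ * I) - (exp (θ * I))⁻¹) ^ (2 * m) := by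
  rw [show 2 * sin θ = -I * (exp (θ * I) - (exp (θ * I))⁻¹) by
      rw [sin, ← exp_neg, neg_mul]; ring,
    mul_pow, pow_mul, neg_sq, I_sq]

lemma Real.sum_range_two_mul_sin_pi_mul_div_pow {n m : ℕ} (hmn : m < n) :
    ∑ k ∈ range n, (2 * sin (π * k / n)) ^ (2 * m) = (2 * m).choose m * n := by
  have hn : (n : ℂ) ≠ 0 := Nat.cast_ne_zero.mpr (by omega)
  have hζ := Complex.isPrimitiveRoot_exp n (by omega)
  have he (k : ℕ) : Complex.exp (↑(π * k / n) * Complex.I) ^ 2 =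
      Complex.exp (2 * π * Complex.I / n) ^ k := by
    rw [← Complex.exp_nat_mul, ← Complex.exp_nat_mul]
    push_cast
    field_simp
  apply Complex.ofReal_injective
  push_cast
  simp_rw [← Complex.ofReal_natCast, ← Complex.ofReal_mul, ← Complex.ofReal_div,
    Complex.two_mul_sin_pow_two_mul, ← mul_sum]
  rw [hζ.sum_sub_inv_pow_two_mul hmn he, ← mul_assoc, ← mul_assoc, ← mul_pow]
  norm_num

theorem sin_even_power_sum_small_general (n m : ℕ) (hm : 1 ≤ m) (hmn : m < n) :
    (2:ℝ) ^ (2 * m) * ∑ k ∈ Finset.Icc 1 (n - 1), Real.sin (Real.pi * k / n) ^ (2 * m)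
      = n * (Nat.choose (2 * m) m : ℝ) := by
  calc (2:ℝ) ^ (2 * m) * ∑ k ∈ Icc 1 (n - 1), Real.sin (Real.pi * k / n) ^ (2 * m)
      = ∑ k ∈ Icc 1 (n - 1), (2 * Real.sin (Real.pi * k / n)) ^ (2 * m) := by
        simp_rw [mul_sum, mul_pow]
    _ = ∑ k ∈ range n, (2 * Real.sin (Real.pi * k / n)) ^ (2 * m) := by
        refine sum_subset (fun k hk => by simp only [mem_Icc, mem_range] at hk ⊢; omega)
          fun k hk hk' => ?_
        obtain rfl : k = 0 := by simp only [mem_Icc, mem_range] at hk hk'; omega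
        rw [Nat.cast_zero, mul_zero, zero_div, Real.sin_zero, mul_zero, zero_pow (by omega)]
    _ = n * (Nat.choose (2 * m) m : ℝ) := by
        rw [Real.sum_range_two_mul_sin_pi_mul_div_pow hmn, mul_comm]

theorem sin_even_power_sum_small (n m : ℕ) (hn : 1 ≤ n) (hm : 1 ≤ m) (hmn : m < n) :
    (2:ℝ) ^ (2 * m) * ∑ k ∈ Finset.Icc 1 (n - 1), Real.sin (Real.pi * k / n) ^ (2 * m)
      = n * (Nat.choose (2 * m) m : ℝ) :=
  sin_even_power_sum_small_general n m hm hmn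
end

section
/- For positive integers n and m, ∑_{k=1}^{n−1} sin^{2m+1}(πk/n) = (1/2^{2m}) ∑_{j=0}^{m} (−1)^{m−j} binom(2m+1, j) cot(π(2m+1−2j)/(2n)). -/
/-!
Writing `2i sin z = e^{iz} - e^{-iz}` and expanding binomially, the terms `j` and `2m+1-j`
combine into a multiple of `sin ((2m+1-2j) z)`, which gives the power reduction
`sin^(2m+1) x = 4^{-m} ∑ⱼ (-1)^(m-j) C(2m+1, j) sin ((2m+1-2j) x)`.
It then suffices to sum `sin (a π k / n)` over `k < n` for odd `a`: after multiplying by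
`2 sin (a π / 2n)` the sum telescopes to `cos (a π / 2n) - cos (a π - a π / 2n)`, and since `a` is
odd this is `2 cos (a π / 2n)`.
-/

open Finset

theorem Finset.sum_range_two_mul_eq_sum_add_reflect {M : Type*} [AddCommMonoid M]
    (f : ℕ → M) (m : ℕ) :
    ∑ k ∈ range (2 * m), f k = ∑ j ∈ range m, (f j + f (2 * m - 1 - j)) := by
  rw [two_mul, sum_range_add, sum_add_distrib, ← sum_range_reflect (fun j => f (m + j))]
  refine congrArg _ (sum_congr rfl fun j hj => ?_)
  rw [mem_range] at hj
  congr 1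
  omega

theorem neg_one_pow_sub_of_le {R : Type*} [Monoid R] [HasDistribNeg R] {j n : ℕ} (h : j ≤ n) :
    (-1 : R) ^ (n - j) = (-1) ^ j * (-1) ^ n := by
  obtain ⟨k, rfl⟩ := Nat.exists_eq_add_of_le h
  rw [Nat.add_sub_cancel_left, pow_add (-1 : R) j k, ← mul_assoc, ← pow_add, ← two_mul, pow_mul,
    neg_one_sq, one_pow, one_mul]

namespace Complex

theorem two_mul_I_mul_sin (z : ℂ) : 2 * I * sin z = exp (z * I) - exp (-z * I) := by
  linear_combination I * two_sin z + (exp (-z * I) - exp (z * I)) * I_sq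

theorem two_mul_I_pow_mul_sin_pow (z : ℂ) (N : ℕ) :
    (2 * I) ^ N * sin z ^ N
      = ∑ k ∈ range (N + 1), (-1) ^ k * N.choose k * exp ((N - 2 * k) * z * I) := by
  rw [← mul_pow, two_mul_I_mul_sin, sub_eq_neg_add, add_pow]
  refine sum_congr rfl fun k hk => ?_
  have hkN : k ≤ N := Nat.lt_succ_iff.mp (mem_range.mp hk)
  rw [neg_pow, mul_assoc _ (exp _ ^ k), ← exp_nat_mul, ← exp_nat_mul, ← exp_add, Nat.cast_sub hkN]
  ring_nf

theorem two_mul_I_pow_mul_sin_pow_two_mul_add_one (z : ℂ) (m : ℕ) :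
    (2 * I) ^ (2 * m + 1) * sin z ^ (2 * m + 1) = 2 * I * ∑ j ∈ range (m + 1),
      (-1) ^ j * (2 * m + 1).choose j * sin ((2 * m + 1 - 2 * j) * z) := by
  rw [two_mul_I_pow_mul_sin_pow, show 2 * m + 1 + 1 = 2 * (m + 1) by ring,
    sum_range_two_mul_eq_sum_add_reflect, mul_sum]
  refine sum_congr rfl fun j hj => ?_
  have hjm : j ≤ 2 * m + 1 := by have := mem_range.mp hj; omega
  have hfirst : (↑(2 * m + 1) - 2 * j) * z * I = ((2 * m + 1 - 2 * j) * z) * I := by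
    push_cast; ring
  have hsecond : (↑(2 * m + 1) - 2 * ↑(2 * m + 1 - j)) * z * I
      = -((2 * m + 1 - 2 * j) * z) * I := by
    push_cast [Nat.cast_sub hjm]; ring
  rw [show 2 * (m + 1) - 1 - j = 2 * m + 1 - j by omega, neg_one_pow_sub_of_le hjm,
    Nat.choose_symm hjm, hfirst, hsecond, pow_succ, pow_mul, neg_one_sq, one_pow, one_mul]
  linear_combination (-(-1) ^ j * ((2 * m + 1).choose j : ℂ))
    * two_mul_I_mul_sin ((2 * m + 1 - 2 * j) * z)

theorem sin_pow_two_mul_add_one (z : ℂ) (m : ℕ) :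
    sin z ^ (2 * m + 1) = 1 / 2 ^ (2 * m) * ∑ j ∈ range (m + 1),
      (-1) ^ (m - j) * (2 * m + 1).choose j * sin ((2 * m + 1 - 2 * j) * z) := by
  have h := two_mul_I_pow_mul_sin_pow_two_mul_add_one z m
  rw [pow_succ', mul_assoc, pow_mul, mul_pow, I_sq] at h
  replace h := mul_left_cancel₀ (mul_ne_zero two_ne_zero I_ne_zero) h
  have hsign : ∀ j ∈ range (m + 1), (-1 : ℂ) ^ (m - j) * (2 * m + 1).choose j
      * sin ((2 * m + 1 - 2 * j) * z)
        = (-1) ^ m * ((-1) ^ j * (2 * m + 1).choose j * sin ((2 * m + 1 - 2 * j) * z)) := by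
    intro j hj
    rw [neg_one_pow_sub_of_le (Nat.lt_succ_iff.mp (mem_range.mp hj))]
    ring
  have hsq : ((-1 : ℂ) ^ m) ^ 2 = 1 := by rw [← pow_mul, pow_mul', neg_one_sq, one_pow]
  rw [sum_congr rfl hsign, ← mul_sum, ← h, mul_pow, pow_mul]
  field_simp
  linear_combination -sin z ^ (2 * m + 1) * hsq

end Complex

namespace Real

theorem sin_pow_two_mul_add_one (x : ℝ) (m : ℕ) :
    sin x ^ (2 * m + 1) = 1 / 2 ^ (2 * m) * ∑ j ∈ range (m + 1),
      (-1) ^ (m - j) * (2 * m + 1).choose j * sin ((2 * m + 1 - 2 * j) * x) := by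
  apply Complex.ofReal_injective
  push_cast
  exact Complex.sin_pow_two_mul_add_one x m

theorem two_mul_sin_half_mul_sum_range_sin (x : ℝ) (n : ℕ) :
    2 * sin (x / 2) * ∑ k ∈ range n, sin (k * x) = cos (x / 2) - cos ((n - 1 / 2) * x) := by
  have htelescope : ∀ k : ℕ,
      2 * sin (x / 2) * sin (k * x) = cos ((k - 1 / 2) * x) - cos (((k + 1 : ℕ) - 1 / 2) * x) := by
    intro k
    rw [show (k - 1 / 2) * x = k * x - x / 2 by ring,
      show (((k + 1 : ℕ) : ℝ) - 1 / 2) * x = k * x + x / 2 by push_cast; ring, cos_sub, cos_add]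
    ring
  rw [mul_sum, sum_congr rfl fun k _ => htelescope k,
    sum_range_sub' (fun k : ℕ => cos ((k - 1 / 2) * x)), Nat.cast_zero,
    show (0 - 1 / 2) * x = -(x / 2) by ring, cos_neg]

theorem sum_range_sin_odd_mul_pi_div_eq_cot {a : ℤ} (ha : Odd a) (n : ℕ) :
    ∑ k ∈ range n, sin (a * (π * k / n)) = cot (π * a / (2 * n)) := by
  rcases eq_or_ne n 0 with rfl | hn
  · -- the sum is empty and `cot 0 = cos 0 / sin 0 = 0`
    simp [cot_eq_cos_div_sin]
  obtain ⟨t, rfl⟩ := ha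
  set y := π * ((2 * t + 1 : ℤ) : ℝ) / (2 * n) with hy
  have hsin : sin y ≠ 0 := by
    rw [Ne, sin_eq_zero_iff]
    rintro ⟨c, hc⟩
    rw [hy, eq_div_iff (by positivity)] at hc
    have hcz : ((c * (2 * n) : ℤ) : ℝ) = ((2 * t + 1 : ℤ) : ℝ) :=
      mul_left_cancel₀ pi_ne_zero (by push_cast at hc ⊢; linear_combination hc)
    have htwo : (2 : ℤ) ∣ 2 * t + 1 := Int.cast_injective hcz ▸ ⟨c * n, by ring⟩
    omega
  have hcos : cos ((n - 1 / 2) * (2 * y)) = -cos y := by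
    rw [show (n - 1 / 2) * (2 * y) = π - y + t * (2 * π) by rw [hy]; field_simp; push_cast; ring,
      cos_add_int_mul_two_pi, cos_pi_sub]
  have htelescope := two_mul_sin_half_mul_sum_range_sin (2 * y) n
  rw [show 2 * y / 2 = y by ring, hcos] at htelescope
  have hsum : ∑ k ∈ range n, sin (((2 * t + 1 : ℤ) : ℝ) * (π * k / n))
      = ∑ k ∈ range n, sin (k * (2 * y)) :=
    sum_congr rfl fun k _ => by rw [hy]; field_simp
  rw [cot_eq_cos_div_sin, eq_div_iff hsin, hsum]
  linear_combination htelescope / 2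

end Real

theorem sin_odd_power_sum_general (n m : ℕ) :
    ∑ k ∈ Finset.Icc 1 (n - 1), Real.sin (Real.pi * k / n) ^ (2 * m + 1)
      = (1 / (2:ℝ) ^ (2 * m)) * ∑ j ∈ Finset.range (m + 1),
          (-1 : ℝ) ^ (m - j) * (Nat.choose (2 * m + 1) j : ℝ)
            * Real.cot (Real.pi * (2 * (m : ℝ) + 1 - 2 * j) / (2 * n)) := by
  have hzero : ∑ k ∈ Icc 1 (n - 1), Real.sin (Real.pi * k / n) ^ (2 * m + 1)
      = ∑ k ∈ range n, Real.sin (Real.pi * k / n) ^ (2 * m + 1) := by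
    refine sum_subset (fun k hk => ?_) fun k hk hk' => ?_
    · simp only [mem_Icc, mem_range] at hk ⊢; omega
    · obtain rfl : k = 0 := by simp only [mem_Icc, mem_range] at hk hk'; omega
      simp
  simp_rw [hzero, Real.sin_pow_two_mul_add_one, ← mul_sum]
  rw [sum_comm]
  refine congrArg _ (sum_congr rfl fun j _ => ?_)
  have hcot := Real.sum_range_sin_odd_mul_pi_div_eq_cot (a := 2 * m + 1 - 2 * j) ⟨m - j, by ring⟩ n
  push_cast at hcot
  rw [← mul_sum, hcot]

theorem sin_odd_power_sum (n m : ℕ) (hn : 1 ≤ n) (hm : 1 ≤ m) :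
    ∑ k ∈ Finset.Icc 1 (n - 1), Real.sin (Real.pi * k / n) ^ (2 * m + 1)
      = (1 / (2:ℝ) ^ (2 * m)) * ∑ j ∈ Finset.range (m + 1),
          (-1 : ℝ) ^ (m - j) * (Nat.choose (2 * m + 1) j : ℝ)
            * Real.cot (Real.pi * (2 * (m : ℝ) + 1 - 2 * j) / (2 * n)) :=
  sin_odd_power_sum_general n m
end

section
/- For every integer n ≥ 1, (1/4) ∑_{k=1}^{n−1} 1/sin^2(πk/n) = (n^2 − 1)/12. -/
/-!
Put `z = exp (2 θ i)`, so that `1 / sin² θ = -4 z / (1 - z)²`. For a nontrivial `n`-th root of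
unity `z`, the function `-2 n z / (1 - z)²` is the discrete Fourier transform
`∑_{j < n} (j² - n j) z ʲ` of a quadratic sequence vanishing at `j = 0`. Summing over all `n`-th
roots of unity `z = ωᵏ` gives `0` by orthogonality, so the sum over the nontrivial ones is minus
the value at `z = 1`, i.e. `-∑_{j < n} (j² - n j) = n (n² - 1) / 6`.
-/

open Finset Complex

section GeomSums

variable {R : Type*} [CommRing R]

theorem one_sub_mul_sum_range_mul_pow (z : R) (m : ℕ) :
    (1 - z) * ∑ j ∈ range m, (j : R) * z ^ j
      = ∑ j ∈ range m, z ^ j - 1 - ((m : R) - 1) * z ^ m := by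
  induction m with
  | zero => simp
  | succ m ih =>
    simp only [sum_range_succ, mul_add, ih]
    push_cast
    ring

theorem one_sub_mul_sum_range_sq_mul_pow (z : R) (m : ℕ) :
    (1 - z) * ∑ j ∈ range m, (j : R) ^ 2 * z ^ j
      = 2 * ∑ j ∈ range m, (j : R) * z ^ j - ∑ j ∈ range m, z ^ j + 1
        - ((m : R) - 1) ^ 2 * z ^ m := by
  induction m with
  | zero => simp
  | succ m ih =>
    simp only [sum_range_succ, mul_add, ih]
    push_cast
    ring

theorem six_mul_sum_range_sq_sub_mul (a : R) (m : ℕ) :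
    6 * ∑ j ∈ range m, ((j : R) ^ 2 - a * j) = m * (m - 1) * (2 * m - 1 - 3 * a) := by
  induction m with
  | zero => simp
  | succ m ih =>
    rw [sum_range_succ, mul_add, ih]
    push_cast
    ring

end GeomSums

section Domain

variable {R : Type*} [CommRing R] [IsDomain R]

theorem geom_sum_eq_zero_of_pow_eq_one {x : R} {n : ℕ} (hx : x ≠ 1) (hxn : x ^ n = 1) :
    ∑ i ∈ range n, x ^ i = 0 := by
  have h := mul_neg_geom_sum x n
  rw [hxn, sub_self] at h
  exact (mul_eq_zero.mp h).resolve_left (sub_ne_zero.mpr hx.symm)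

theorem IsPrimitiveRoot.sum_range_sum_range_mul_pow_mul {n : ℕ} {ω : R}
    (hω : IsPrimitiveRoot ω n) (c : ℕ → R) :
    ∑ k ∈ range n, ∑ j ∈ range n, c j * ω ^ (k * j) = n * c 0 := by
  have hcol : ∀ j ∈ range n,
      ∑ k ∈ range n, c j * ω ^ (k * j) = if j = 0 then n * c 0 else 0 := by
    intro j hj
    split_ifs with hj0
    · simp [hj0, mul_comm]
    · simp_rw [← mul_sum, mul_comm _ j, pow_mul]
      rw [geom_sum_eq_zero_of_pow_eq_one (hω.pow_ne_one_of_pos_of_lt hj0 (mem_range.mp hj))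
        (by rw [pow_right_comm, hω.pow_eq_one, one_pow]), mul_zero]
  rw [sum_comm, sum_congr rfl hcol, sum_ite_eq']
  rcases n.eq_zero_or_pos with rfl | hn
  · simp
  · simp [hn]

end Domain

theorem sum_range_sq_sub_mul_mul_pow_of_pow_eq_one {K : Type*} [Field K] {n : ℕ} {z : K}
    (hzn : z ^ n = 1) (hz : z ≠ 1) :
    ∑ j ∈ range n, ((j : K) ^ 2 - n * j) * z ^ j = -2 * n * z / (1 - z) ^ 2 := by
  have h1 := one_sub_mul_sum_range_mul_pow z n
  have h2 := one_sub_mul_sum_range_sq_mul_pow z n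
  rw [geom_sum_eq_zero_of_pow_eq_one hz hzn, hzn] at h1 h2
  simp only [sub_mul, sum_sub_distrib, mul_assoc, ← mul_sum]
  rw [eq_div_iff (pow_ne_zero 2 (sub_ne_zero.mpr hz.symm))]
  linear_combination (1 - z) * h2 + (2 - n * (1 - z)) * h1

theorem Complex.ofReal_sin_sq (θ : ℝ) :
    ((Real.sin θ ^ 2 : ℝ) : ℂ) = -(1 - exp (2 * θ * I)) ^ 2 / (4 * exp (2 * θ * I)) := by
  have hw : exp (2 * θ * I) = exp (θ * I) ^ 2 := by rw [← exp_nat_mul]; ring_nf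
  rw [ofReal_pow, ofReal_sin, sin, hw, neg_mul, exp_neg]
  field_simp
  ring_nf
  rw [I_sq]
  ring

theorem Complex.ofReal_one_div_sin_sq_pi_mul_div {n k : ℕ} (hk : 0 < k) (hkn : k < n) :
    ((1 / Real.sin (Real.pi * k / n) ^ 2 : ℝ) : ℂ)
      = 2 / n * ∑ j ∈ range n, ((j : ℂ) ^ 2 - n * j) * exp (2 * Real.pi * I / n) ^ (k * j) := by
  have hω := isPrimitiveRoot_exp n (by omega)
  have hexp : exp (2 * (Real.pi * k / n : ℝ) * I) = exp (2 * Real.pi * I / n) ^ k := by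
    rw [← exp_nat_mul]; push_cast; ring_nf
  simp only [pow_mul]
  rw [sum_range_sq_sub_mul_mul_pow_of_pow_eq_one (by rw [pow_right_comm, hω.pow_eq_one, one_pow])
      (hω.pow_ne_one_of_pos_of_lt hk.ne' hkn), ofReal_div, ofReal_one, ofReal_sin_sq, hexp]
  have hn0 : (n : ℂ) ≠ 0 := by exact_mod_cast (by omega : n ≠ 0)
  field_simp
  ring

theorem zeta_cycle_one (n : ℕ) (hn : 1 ≤ n) :
    (1 / 4 : ℝ) * ∑ k ∈ Finset.Icc 1 (n - 1), 1 / Real.sin (Real.pi * k / n) ^ 2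
      = ((n : ℝ) ^ 2 - 1) / 12 := by
  set F : ℕ → ℂ := fun k =>
    ∑ j ∈ range n, ((j : ℂ) ^ 2 - n * j) * exp (2 * Real.pi * I / n) ^ (k * j)
  have hterm : ∀ k ∈ Icc 1 (n - 1),
      ((1 / Real.sin (Real.pi * k / n) ^ 2 : ℝ) : ℂ) = 2 / n * F k := fun k hk => by
    obtain ⟨hk1, hkn⟩ := mem_Icc.mp hk
    exact ofReal_one_div_sin_sq_pi_mul_div hk1 (by omega)
  have hsplit : ∑ k ∈ Icc 1 (n - 1), F k = ∑ k ∈ range n, F k - F 0 := by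
    rw [Icc_sub_one_right_eq_Ico_of_not_isMin (by simpa using (by omega : n ≠ 0)),
      ← sum_range_add_sum_Ico F hn, sum_range_one]
    ring
  have horth : ∑ k ∈ range n, F k = 0 := by
    rw [(isPrimitiveRoot_exp n (by omega)).sum_range_sum_range_mul_pow_mul
      fun j : ℕ => (j : ℂ) ^ 2 - n * j]
    simp
  have hF0 : F 0 = ∑ j ∈ range n, ((j : ℂ) ^ 2 - n * j) := by simp [F]
  have hsum := six_mul_sum_range_sq_sub_mul (n : ℂ) n
  have hn0 : (n : ℂ) ≠ 0 := by exact_mod_cast (by omega : n ≠ 0)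
  apply ofReal_injective
  rw [ofReal_mul, ofReal_sum, sum_congr rfl hterm, ← mul_sum, hsplit, horth, hF0]
  generalize ∑ j ∈ range n, ((j : ℂ) ^ 2 - n * j) = S at hsum ⊢
  push_cast
  field_simp
  linear_combination -4 * hsum
end
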